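/- arXiv:2004.09860 — 2 statements merged into one kernel-verified Lean document; each statement's English description precedes it below -/
import Mathlib

section
/- Let X ⊂ ℝ^d be bounded and δ > 0, and let (A_m)_{m∈M} be a finite covering of X by pairwise disjoint cubes of side length δ. Define R^δ v on X by setting, on each A_m ∩ X, the value δ^{-d} ∫_{A_m} v(x) dx, for v ∈ L²(ℝ^d). Then ‖R^δ v − v‖_{L²(X)} ≤ 2^{d/2} · sup_{|z|_∞ ≤ δ} ‖v(·+z) − v‖_{L²(X)} (functions extended by 0 outside of relevant domains where needed). -/
/-!
On a cube `Q ∋ x` of side `δ`, `R v x - v x` is the average over `Q` of `v y - v x`, so by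
Cauchy–Schwarz its square is at most `δ⁻ᵈ ∫_Q |v y - v x|² dy`. As `Q` lies in the sup-norm ball
of radius `δ` around `x`, this is at most `δ⁻ᵈ ∫_{|z|_∞ ≤ δ} |v (x + z) - v x|² dz`. Integrating
over `X` and exchanging the integrals bounds `‖R v - v‖²` by `δ⁻ᵈ (2δ)ᵈ` times the supremum of
`‖v (· + z) - v‖²` over `|z|_∞ ≤ δ`.
-/

open MeasureTheory ENNReal Set Metric

section

variable {α : Type*} [MeasurableSpace α] {μ : Measure α}

theorem lintegral_sq_le_measure_univ_mul {f : α → ℝ≥0∞} (hf : AEMeasurable f μ) :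
    (∫⁻ a, f a ∂μ) ^ 2 ≤ μ univ * ∫⁻ a, f a ^ 2 ∂μ := by
  have h := ENNReal.lintegral_mul_le_Lp_mul_Lq μ Real.HolderConjugate.two_two hf aemeasurable_const
    (g := 1)
  simp only [Pi.mul_apply, Pi.one_apply, mul_one, lintegral_const, rpow_two, one_pow, one_mul] at h
  calc (∫⁻ a, f a ∂μ) ^ 2
      ≤ ((∫⁻ a, f a ^ 2 ∂μ) ^ (1 / 2 : ℝ) * μ univ ^ (1 / 2 : ℝ)) ^ 2 := by gcongr
    _ = μ univ * ∫⁻ a, f a ^ 2 ∂μ := by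
      rw [mul_pow, ← rpow_natCast, ← rpow_natCast (μ univ ^ _), ← rpow_mul, ← rpow_mul]
      norm_num [mul_comm]

theorem laverage_sq_le_laverage_sq {f : α → ℝ≥0∞} (hf : AEMeasurable f μ) :
    (⨍⁻ a, f a ∂μ) ^ 2 ≤ ⨍⁻ a, f a ^ 2 ∂μ := by
  simp only [laverage_eq']
  calc _ ≤ ((μ univ)⁻¹ • μ) univ * ∫⁻ a, f a ^ 2 ∂(μ univ)⁻¹ • μ :=
        lintegral_sq_le_measure_univ_mul (hf.smul_measure _)
    _ ≤ _ := by
      rw [Measure.smul_apply, smul_eq_mul]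
      exact mul_le_of_le_one_left' (ENNReal.inv_mul_le_one _)

theorem enorm_average_le_laverage_enorm {E : Type*} [NormedAddCommGroup E] [NormedSpace ℝ E]
    (f : α → E) : ‖⨍ a, f a ∂μ‖ₑ ≤ ⨍⁻ a, ‖f a‖ₑ ∂μ := by
  rw [average_eq', laverage_eq']
  exact enorm_integral_le_lintegral_enorm _

theorem enorm_setAverage_sub_sq_le {s : Set α} (hs₀ : μ s ≠ 0) (hs : μ s ≠ ∞) {f : α → ℝ}
    (hf : IntegrableOn f s μ) (c : ℝ) :
    ‖(⨍ y in s, f y ∂μ) - c‖ₑ ^ 2 ≤ (μ s)⁻¹ * ∫⁻ y in s, ‖f y - c‖ₑ ^ 2 ∂μ := by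
  have hsub : (⨍ y in s, f y ∂μ) - c = ⨍ y in s, (f y - c) ∂μ := by
    rw [setAverage_eq, setAverage_eq, integral_sub hf (integrableOn_const hs), setIntegral_const,
      smul_sub, smul_smul, measureReal_def,
      inv_mul_cancel₀ (by simp [ENNReal.toReal_eq_zero_iff, hs₀, hs]), one_smul]
  calc ‖(⨍ y in s, f y ∂μ) - c‖ₑ ^ 2 ≤ (⨍⁻ y in s, ‖f y - c‖ₑ ∂μ) ^ 2 := by
        rw [hsub]; gcongr; exact enorm_average_le_laverage_enorm _
    _ ≤ ⨍⁻ y in s, ‖f y - c‖ₑ ^ 2 ∂μ :=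
        laverage_sq_le_laverage_sq (hf.sub (integrableOn_const hs)).aemeasurable.enorm
    _ = (μ s)⁻¹ * ∫⁻ y in s, ‖f y - c‖ₑ ^ 2 ∂μ := by
        rw [setLAverage_eq, ENNReal.div_eq_inv_mul]

theorem eLpNorm_two_sq {E : Type*} [NormedAddCommGroup E] (f : α → E) (μ : Measure α) :
    eLpNorm f 2 μ ^ 2 = ∫⁻ x, ‖f x‖ₑ ^ 2 ∂μ := by
  simpa using eLpNorm_nnreal_pow_eq_lintegral (f := f) (μ := μ) (p := 2) two_ne_zero

end

theorem setLIntegral_closedBall_eq_lintegral_add {E : Type*} [NormedAddCommGroup E]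
    [MeasurableSpace E] [BorelSpace E] (μ : Measure E) [μ.IsAddLeftInvariant] (f : E → ℝ≥0∞)
    (x : E) (r : ℝ) :
    ∫⁻ y in closedBall x r, f y ∂μ = ∫⁻ z in closedBall 0 r, f (x + z) ∂μ := by
  rw [← (measurePreserving_add_left μ x).setLIntegral_comp_preimage_emb
    (measurableEmbedding_addLeft x), preimage_add_closedBall, sub_self]

def cube {ι : Type*} (a : ι → ℝ) (δ : ℝ) : Set (ι → ℝ) :=
  univ.pi fun i => Ico (a i) (a i + δ)

section cube

variable {ι : Type*} [Fintype ι]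

theorem volume_cube (a : ι → ℝ) (δ : ℝ) :
    volume (cube a δ) = ENNReal.ofReal δ ^ Fintype.card ι := by
  simp [cube, volume_pi_pi, Real.volume_Ico]

theorem volume_real_cube (a : ι → ℝ) {δ : ℝ} (hδ : 0 ≤ δ) :
    volume.real (cube a δ) = δ ^ Fintype.card ι := by
  simp [measureReal_def, volume_cube, hδ]

theorem cube_subset_closedBall {a x : ι → ℝ} {δ : ℝ} (hδ : 0 ≤ δ) (hx : x ∈ cube a δ) :
    cube a δ ⊆ closedBall x δ := by
  intro y hy
  rw [mem_closedBall, dist_pi_le_iff hδ]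
  intro i
  have hxi := hx i (mem_univ i)
  have hyi := hy i (mem_univ i)
  rw [mem_Ico] at hxi hyi
  rw [Real.dist_eq, abs_le]
  constructor <;> linarith

theorem enorm_setAverage_cube_sub_sq_le {a x : ι → ℝ} {δ : ℝ} (hδ : 0 < δ) (hx : x ∈ cube a δ)
    {g : (ι → ℝ) → ℝ} (hg : IntegrableOn g (cube a δ)) :
    ‖(⨍ y in cube a δ, g y) - g x‖ₑ ^ 2 ≤
      (ENNReal.ofReal δ ^ Fintype.card ι)⁻¹ *
        ∫⁻ z in closedBall 0 δ, ‖g (x + z) - g x‖ₑ ^ 2 := by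
  calc ‖(⨍ y in cube a δ, g y) - g x‖ₑ ^ 2
      ≤ (volume (cube a δ))⁻¹ * ∫⁻ y in cube a δ, ‖g y - g x‖ₑ ^ 2 :=
        enorm_setAverage_sub_sq_le (by simp [volume_cube, hδ]) (by simp [volume_cube]) hg _
    _ ≤ (volume (cube a δ))⁻¹ * ∫⁻ y in closedBall x δ, ‖g y - g x‖ₑ ^ 2 := by
        gcongr; exact cube_subset_closedBall hδ.le hx
    _ = _ := by rw [volume_cube, setLIntegral_closedBall_eq_lintegral_add]

theorem lintegral_sq_enorm_sub_le_of_eq_setAverage_cube {X : Set (ι → ℝ)} {δ : ℝ} (hδ : 0 < δ)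
    {g R : (ι → ℝ) → ℝ} (hg : Measurable g) (hgi : LocallyIntegrable g)
    (hR : ∀ x ∈ X, ∃ a, x ∈ cube a δ ∧ R x = ⨍ y in cube a δ, g y) {K : ℝ≥0∞}
    (hK : ∀ z ∈ closedBall (0 : ι → ℝ) δ, ∫⁻ x in X, ‖g (x + z) - g x‖ₑ ^ 2 ≤ K) :
    ∫⁻ x in X, ‖R x - g x‖ₑ ^ 2 ≤ 2 ^ Fintype.card ι * K := by
  let B := closedBall (0 : ι → ℝ) δ
  let c := ENNReal.ofReal δ ^ Fintype.card ι
  have hF : Measurable (Function.uncurry fun x z : ι → ℝ => ‖g (x + z) - g x‖ₑ ^ 2) := by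
    fun_prop
  have hinner : Measurable fun x => ∫⁻ z in B, ‖g (x + z) - g x‖ₑ ^ 2 :=
    hF.lintegral_prod_right'
  have hpoint (x) (hx : x ∈ X) :
      ‖R x - g x‖ₑ ^ 2 ≤ c⁻¹ * ∫⁻ z in B, ‖g (x + z) - g x‖ₑ ^ 2 := by
    obtain ⟨a, hxa, hRx⟩ := hR x hx
    have hga : IntegrableOn g (cube a δ) :=
      (hgi.integrableOn_isCompact (isCompact_closedBall x δ)).mono_set
        (cube_subset_closedBall hδ.le hxa)
    rw [hRx]
    exact enorm_setAverage_cube_sub_sq_le hδ hxa hga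
  have hB : volume B = 2 ^ Fintype.card ι * c := by
    rw [Real.volume_pi_closedBall _ hδ.le, mul_pow, ENNReal.ofReal_mul (by positivity),
      ENNReal.ofReal_pow hδ.le]
    simp [c]
  calc ∫⁻ x in X, ‖R x - g x‖ₑ ^ 2
      ≤ ∫⁻ x in X, c⁻¹ * ∫⁻ z in B, ‖g (x + z) - g x‖ₑ ^ 2 :=
        setLIntegral_mono (hinner.const_mul _) hpoint
    _ = c⁻¹ * ∫⁻ z in B, ∫⁻ x in X, ‖g (x + z) - g x‖ₑ ^ 2 := by
        rw [lintegral_const_mul _ hinner, lintegral_lintegral_swap hF.aemeasurable]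
    _ ≤ c⁻¹ * ∫⁻ _ in B, K := mul_le_mul_right (setLIntegral_mono measurable_const hK) _
    _ = 2 ^ Fintype.card ι * K := by
        rw [setLIntegral_const, hB, ← ENNReal.div_eq_inv_mul, ← mul_assoc,
          ENNReal.mul_div_cancel_right (by simp [c, hδ]) (by simp [c]), mul_comm]

theorem eLpNorm_sub_le_of_eq_setAverage_cube {X : Set (ι → ℝ)} {δ : ℝ} (hδ : 0 < δ)
    {v R : (ι → ℝ) → ℝ} (hv : MemLp v 2 volume)
    (hR : ∀ x ∈ X, ∃ a, x ∈ cube a δ ∧ R x = ⨍ y in cube a δ, v y) :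
    eLpNorm (fun x => R x - v x) 2 (volume.restrict X) ≤
      2 ^ ((Fintype.card ι : ℝ) / 2) *
        ⨆ z ∈ closedBall (0 : ι → ℝ) δ,
          eLpNorm (fun x => v (x + z) - v x) 2 (volume.restrict X) := by
  have hvm := hv.aestronglyMeasurable.aemeasurable
  set g := hvm.mk v
  have hvg : v =ᵐ[volume] g := hvm.ae_eq_mk
  set S := ⨆ z ∈ closedBall (0 : ι → ℝ) δ,
    eLpNorm (fun x => v (x + z) - v x) 2 (volume.restrict X)
  have hRg (x) (hx : x ∈ X) : ∃ a, x ∈ cube a δ ∧ R x = ⨍ y in cube a δ, g y := by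
    obtain ⟨a, hxa, hRx⟩ := hR x hx
    exact ⟨a, hxa, hRx.trans (average_congr (ae_restrict_of_ae hvg))⟩
  have hK (z) (hz : z ∈ closedBall (0 : ι → ℝ) δ) :
      ∫⁻ x in X, ‖g (x + z) - g x‖ₑ ^ 2 ≤ S ^ 2 := by
    have htrans : (fun x => v (x + z) - v x) =ᵐ[volume] fun x => g (x + z) - g x :=
      ((measurePreserving_add_right volume z).quasiMeasurePreserving.ae_eq_comp hvg).sub hvg
    rw [← eLpNorm_two_sq, ← eLpNorm_congr_ae (ae_restrict_of_ae htrans)]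
    gcongr
    exact le_biSup (fun z => eLpNorm (fun x => v (x + z) - v x) 2 (volume.restrict X)) hz
  have hsq : eLpNorm (fun x => R x - v x) 2 (volume.restrict X) ^ 2 ≤
      2 ^ Fintype.card ι * S ^ 2 := by
    have hdiff : (fun x => R x - v x) =ᵐ[volume] fun x => R x - g x :=
      hvg.mono fun x hx => congrArg (R x - ·) hx
    rw [eLpNorm_congr_ae (ae_restrict_of_ae hdiff), eLpNorm_two_sq]
    exact lintegral_sq_enorm_sub_le_of_eq_setAverage_cube hδ hvm.measurable_mk
      ((hv.ae_eq hvg).locallyIntegrable one_le_two) hRg hK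
  have htwo : ((2 : ℝ≥0∞) ^ ((Fintype.card ι : ℝ) / 2)) ^ 2 = 2 ^ Fintype.card ι := by
    rw [← rpow_natCast, ← rpow_mul]
    norm_num
  rwa [← ENNReal.pow_le_pow_left_iff two_ne_zero, mul_pow, htwo]

end cube

theorem stmt_5_general {d : ℕ} (X : Set (Fin d → ℝ))
    (δ : ℝ) (hδ : 0 < δ) {ι : Type} (M : Finset ι) (A : ι → Set (Fin d → ℝ))
    (hcube : ∀ m ∈ M, ∃ a : Fin d → ℝ,
      A m = Set.univ.pi fun i => Set.Ico (a i) (a i + δ))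
    (hcover : X ⊆ ⋃ m ∈ M, A m)
    (v : (Fin d → ℝ) → ℝ) (hv : MemLp v 2 volume)
    (Rv : (Fin d → ℝ) → ℝ)
    (hRv : ∀ m ∈ M, ∀ x ∈ A m ∩ X, Rv x = (δ ^ d)⁻¹ * ∫ y in A m, v y) :
    eLpNorm (fun x => Rv x - v x) 2 (volume.restrict X)
      ≤ (2 : ℝ≥0∞) ^ ((d : ℝ) / 2) *
        ⨆ z ∈ {z : Fin d → ℝ | ‖z‖ ≤ δ},
          eLpNorm (fun x => v (x + z) - v x) 2 (volume.restrict X) := by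
  have hR : ∀ x ∈ X, ∃ a, x ∈ cube a δ ∧ Rv x = ⨍ y in cube a δ, v y := by
    intro x hx
    obtain ⟨m, hm, hxm⟩ := mem_iUnion₂.mp (hcover hx)
    obtain ⟨a, hAm⟩ := hcube m hm
    replace hAm : A m = cube a δ := hAm
    refine ⟨a, hAm ▸ hxm, ?_⟩
    rw [hRv m hm x ⟨hxm, hx⟩, hAm, setAverage_eq, volume_real_cube a hδ.le, Fintype.card_fin,
      smul_eq_mul]
  simpa using eLpNorm_sub_le_of_eq_setAverage_cube hδ hv hR

theorem stmt_5 {d : ℕ} (X : Set (Fin d → ℝ)) (hX : Bornology.IsBounded X)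
    (δ : ℝ) (hδ : 0 < δ) {ι : Type} (M : Finset ι) (A : ι → Set (Fin d → ℝ))
    (hcube : ∀ m ∈ M, ∃ a : Fin d → ℝ,
      A m = Set.univ.pi fun i => Set.Ico (a i) (a i + δ))
    (hdisj : ∀ m ∈ M, ∀ m' ∈ M, m ≠ m' → Disjoint (A m) (A m'))
    (hcover : X ⊆ ⋃ m ∈ M, A m)
    (v : (Fin d → ℝ) → ℝ) (hv : MemLp v 2 volume)
    (Rv : (Fin d → ℝ) → ℝ)
    (hRv : ∀ m ∈ M, ∀ x ∈ A m ∩ X, Rv x = (δ ^ d)⁻¹ * ∫ y in A m, v y) :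
    eLpNorm (fun x => Rv x - v x) 2 (volume.restrict X)
      ≤ (2 : ℝ≥0∞) ^ ((d : ℝ) / 2) *
        ⨆ z ∈ {z : Fin d → ℝ | ‖z‖ ≤ δ},
          eLpNorm (fun x => v (x + z) - v x) 2 (volume.restrict X) :=
  stmt_5_general X δ hδ M A hcube hcover v hv Rv hRv
end

section
/- Let S : ℝ → ℝ be non-decreasing and continuous, let Q be a finite measure space, and let (p_k) be a sequence in L²(Q) converging weakly in L²(Q) to p, such that (S(p_k)) converges strongly in L²(Q) to some s ∈ L²(Q). Then s = S(p) almost everywhere. -/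
/-!
Monotonicity of `S` gives `∫ (S pₖ - S φ) (pₖ - φ) ≥ 0` for every `φ ∈ L²`. Weakly convergent
sequences are bounded (Banach–Steinhaus), so their pairing with a strongly convergent sequence
converges, and in the limit `∫ (s - S φ) (p - φ) ≥ 0`. Taking `φ = p - t ψ`, dividing by `t > 0`
and letting `t → 0` (dominated convergence, `S` being continuous and bounded) gives
`∫ (s - S p) ψ ≥ 0` for every `ψ ∈ L²`, and `ψ = -(s - S p)` forces `s = S p` a.e.
-/

open MeasureTheory Filter Topology
open scoped InnerProductSpace

namespace MeasureTheory

variable {α : Type*} [MeasurableSpace α] {μ : Measure α}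

lemma integral_mul_eq_inner_toLp {f g : α → ℝ} (hf : MemLp f 2 μ) (hg : MemLp g 2 μ) :
    ∫ x, f x * g x ∂μ = ⟪hf.toLp f, hg.toLp g⟫_ℝ := by
  rw [L2.inner_def]
  refine integral_congr_ae ?_
  filter_upwards [hf.coeFn_toLp, hg.coeFn_toLp] with x hfx hgx
  simp [hfx, hgx, mul_comm]

lemma abs_integral_mul_le_eLpNorm_mul_eLpNorm {f g : α → ℝ} (hf : MemLp f 2 μ)
    (hg : MemLp g 2 μ) :
    |∫ x, f x * g x ∂μ| ≤ (eLpNorm f 2 μ).toReal * (eLpNorm g 2 μ).toReal := by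
  rw [integral_mul_eq_inner_toLp hf hg, ← Lp.norm_toLp f hf, ← Lp.norm_toLp g hg]
  exact abs_real_inner_le_norm _ _

lemma integral_sub_mul_sub_nonneg_of_monotone {S : ℝ → ℝ} (hS : Monotone S) (f g : α → ℝ) :
    0 ≤ ∫ x, (S (f x) - S (g x)) * (f x - g x) ∂μ :=
  integral_nonneg fun x => (monovary_id_iff.2 hS).sub_mul_sub_nonneg (g x) (f x)

lemma memLp_comp_of_continuous_of_abs_le [IsFiniteMeasure μ] {S : ℝ → ℝ} (hS : Continuous S)
    {C : ℝ} (hC : ∀ z, |S z| ≤ C) {f : α → ℝ} (hf : AEStronglyMeasurable f μ) (q : ENNReal) :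
    MemLp (fun x => S (f x)) q μ :=
  MemLp.of_bound (hS.comp_aestronglyMeasurable hf) C (ae_of_all _ fun x => hC (f x))

def TendstoWeaklyL2 (μ : Measure α) (f : ℕ → α → ℝ) (g : α → ℝ) : Prop :=
  ∀ φ, MemLp φ 2 μ → Tendsto (fun k => ∫ x, f k x * φ x ∂μ) atTop (𝓝 (∫ x, g x * φ x ∂μ))

namespace TendstoWeaklyL2

variable {f : ℕ → α → ℝ} {g : α → ℝ}

lemma exists_eLpNorm_le (hfg : TendstoWeaklyL2 μ f g) (hf : ∀ k, MemLp (f k) 2 μ) :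
    ∃ C, ∀ k, (eLpNorm (f k) 2 μ).toReal ≤ C := by
  let F : ℕ → Lp ℝ 2 μ := fun k => (hf k).toLp (f k)
  have hbdd : ∀ φ : Lp ℝ 2 μ, ∃ C, ∀ k, ‖innerSL ℝ (F k) φ‖ ≤ C := by
    intro φ
    have hφ : Tendsto (fun k => innerSL ℝ (F k) φ) atTop
        (𝓝 (∫ x, g x * (φ : α → ℝ) x ∂μ)) := by
      have hinner : ∀ k, innerSL ℝ (F k) φ = ∫ x, f k x * (φ : α → ℝ) x ∂μ := fun k => by
        rw [innerSL_apply_apply, integral_mul_eq_inner_toLp (hf k) (Lp.memLp φ), Lp.toLp_coeFn]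
      simpa only [hinner] using hfg _ (Lp.memLp φ)
    obtain ⟨C, hC⟩ := hφ.norm.bddAbove_range
    exact ⟨C, fun k => hC (Set.mem_range_self k)⟩
  obtain ⟨C, hC⟩ := banach_steinhaus hbdd
  exact ⟨C, fun k => by simpa only [innerSL_apply_norm, F, Lp.norm_toLp] using hC k⟩

lemma sub_const (hfg : TendstoWeaklyL2 μ f g) (hf : ∀ k, MemLp (f k) 2 μ) (hg : MemLp g 2 μ)
    {h : α → ℝ} (hh : MemLp h 2 μ) :
    TendstoWeaklyL2 μ (fun k x => f k x - h x) (fun x => g x - h x) := by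
  intro φ hφ
  have hhφ : Integrable (fun x => h x * φ x) μ := hh.integrable_mul hφ
  have hsub : ∀ {F : α → ℝ}, MemLp F 2 μ →
      ∫ x, (F x - h x) * φ x ∂μ = ∫ x, F x * φ x ∂μ - ∫ x, h x * φ x ∂μ := fun hF => by
    simp only [sub_mul]
    exact integral_sub (hF.integrable_mul hφ) hhφ
  simpa only [hsub (hf _), hsub hg] using (hfg φ hφ).sub_const _

lemma tendsto_integral_mul (hfg : TendstoWeaklyL2 μ f g) (hf : ∀ k, MemLp (f k) 2 μ)
    {u : ℕ → α → ℝ} {v : α → ℝ} (hu : ∀ k, MemLp (u k) 2 μ) (hv : MemLp v 2 μ)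
    (huv : Tendsto (fun k => eLpNorm (fun x => u k x - v x) 2 μ) atTop (𝓝 0)) :
    Tendsto (fun k => ∫ x, u k x * f k x ∂μ) atTop (𝓝 (∫ x, v x * g x ∂μ)) := by
  obtain ⟨C, hC⟩ := hfg.exists_eLpNorm_le hf
  have hsplit : ∀ k, ∫ x, u k x * f k x ∂μ
      = ∫ x, (u k x - v x) * f k x ∂μ + ∫ x, f k x * v x ∂μ := fun k => by
    rw [← integral_add (f := fun x => (u k x - v x) * f k x) (g := fun x => f k x * v x)
      (((hu k).sub hv).integrable_mul (hf k)) ((hf k).integrable_mul hv)]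
    congr 1 with x
    ring
  have hsmall : Tendsto (fun k => ∫ x, (u k x - v x) * f k x ∂μ) atTop (𝓝 0) := by
    refine squeeze_zero_norm (fun k => ?_)
      (by simpa using ((ENNReal.tendsto_toReal ENNReal.zero_ne_top).comp huv).mul_const C)
    exact (abs_integral_mul_le_eLpNorm_mul_eLpNorm ((hu k).sub hv) (hf k)).trans
      (mul_le_mul_of_nonneg_left (hC k) ENNReal.toReal_nonneg)
  simpa only [hsplit, zero_add, mul_comm (g _)] using hsmall.add (hfg v hv)

end TendstoWeaklyL2

lemma integral_sub_mul_sub_nonneg_of_tendsto [IsFiniteMeasure μ] {S : ℝ → ℝ}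
    (hmono : Monotone S) (hcont : Continuous S) {C : ℝ} (hC : ∀ z, |S z| ≤ C)
    {pk : ℕ → α → ℝ} {p s : α → ℝ} (hpk : ∀ k, MemLp (pk k) 2 μ) (hp : MemLp p 2 μ)
    (hs : MemLp s 2 μ) (hweak : TendstoWeaklyL2 μ pk p)
    (hstrong : Tendsto (fun k => eLpNorm (fun x => S (pk k x) - s x) 2 μ) atTop (𝓝 0))
    {φ : α → ℝ} (hφ : MemLp φ 2 μ) :
    0 ≤ ∫ x, (s x - S (φ x)) * (p x - φ x) ∂μ := by
  have hSφ : MemLp (fun x => S (φ x)) 2 μ := memLp_comp_of_continuous_of_abs_le hcont hC hφ.1 2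
  have hlim := (hweak.sub_const hpk hp hφ).tendsto_integral_mul
    (u := fun k x => S (pk k x) - S (φ x)) (v := fun x => s x - S (φ x))
    (fun k => (hpk k).sub hφ)
    (fun k => (memLp_comp_of_continuous_of_abs_le hcont hC (hpk k).1 2).sub hSφ) (hs.sub hSφ)
    (by simpa only [sub_sub_sub_cancel_right] using hstrong)
  exact ge_of_tendsto hlim (Eventually.of_forall fun k =>
    integral_sub_mul_sub_nonneg_of_monotone hmono (pk k) φ)

lemma integral_sub_comp_mul_nonneg [IsFiniteMeasure μ] {S : ℝ → ℝ}
    (hcont : Continuous S) {C : ℝ} (hC : ∀ z, |S z| ≤ C) {p s : α → ℝ} (hp : MemLp p 2 μ)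
    (hs : MemLp s 2 μ)
    (hminty : ∀ φ, MemLp φ 2 μ → 0 ≤ ∫ x, (s x - S (φ x)) * (p x - φ x) ∂μ)
    {ψ : α → ℝ} (hψ : MemLp ψ 2 μ) :
    0 ≤ ∫ x, (s x - S (p x)) * ψ x ∂μ := by
  set F : ℝ → ℝ := fun t => ∫ x, (s x - S (p x - t * ψ x)) * ψ x ∂μ with hF
  have hF_cont : Continuous F := by
    refine continuous_of_dominated (bound := fun x => (|s x| + C) * |ψ x|)
      (fun t => ?_) (fun t => ae_of_all _ fun x => ?_) ?_ (ae_of_all _ fun x => by fun_prop)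
    · exact (hs.1.sub (hcont.comp_aestronglyMeasurable (hp.1.sub (hψ.1.const_mul t)))).mul hψ.1
    · rw [norm_mul, Real.norm_eq_abs, Real.norm_eq_abs]
      gcongr
      exact (abs_sub _ _).trans (add_le_add_right (hC _) _)
    · exact (hs.abs.add (memLp_const C)).integrable_mul hψ.abs
  have hF_nonneg : ∀ t > 0, 0 ≤ F t := fun t ht => by
    have h := hminty (fun x => p x - t * ψ x) (hp.sub (hψ.const_mul t))
    simp only [sub_sub_cancel, mul_left_comm _ t, integral_const_mul] at h
    exact nonneg_of_mul_nonneg_right h ht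
  have hF_lim : Tendsto F (𝓝[>] 0) (𝓝 (F 0)) :=
    hF_cont.continuousAt.tendsto.mono_left nhdsWithin_le_nhds
  simpa only [hF, zero_mul, sub_zero] using
    ge_of_tendsto hF_lim (eventually_nhdsWithin_of_forall hF_nonneg)

lemma ae_eq_zero_of_forall_integral_mul_nonneg {h : α → ℝ} (hh : MemLp h 2 μ)
    (hpos : ∀ ψ, MemLp ψ 2 μ → 0 ≤ ∫ x, h x * ψ x ∂μ) : h =ᵐ[μ] 0 := by
  have hsq : ∫ x, h x * h x ∂μ = 0 := by
    refine le_antisymm ?_ (integral_nonneg fun x => mul_self_nonneg (h x))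
    simpa only [mul_neg, integral_neg, neg_nonneg] using hpos (fun x => -h x) hh.neg
  filter_upwards [(integral_eq_zero_iff_of_nonneg (fun x => mul_self_nonneg (h x))
    (hh.integrable_mul hh)).1 hsq] with x hx
  exact mul_self_eq_zero.1 hx

theorem ae_eq_comp_of_forall_integral_sub_mul_sub_nonneg [IsFiniteMeasure μ] {S : ℝ → ℝ}
    (hcont : Continuous S) {C : ℝ} (hC : ∀ z, |S z| ≤ C) {p s : α → ℝ} (hp : MemLp p 2 μ)
    (hs : MemLp s 2 μ)
    (hminty : ∀ φ, MemLp φ 2 μ → 0 ≤ ∫ x, (s x - S (φ x)) * (p x - φ x) ∂μ) :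
    s =ᵐ[μ] fun x => S (p x) := by
  have hzero := ae_eq_zero_of_forall_integral_mul_nonneg
    (hs.sub (memLp_comp_of_continuous_of_abs_le hcont hC hp.1 2))
    fun ψ hψ => integral_sub_comp_mul_nonneg hcont hC hp hs hminty hψ
  filter_upwards [hzero] with x hx
  exact sub_eq_zero.1 hx

end MeasureTheory

theorem stmt_13 {Q : Type*} [MeasurableSpace Q] (μ : Measure Q) [IsFiniteMeasure μ]
    (S : ℝ → ℝ) (hmono : Monotone S) (hcont : Continuous S)
    (hSbd : ∀ z, S z ∈ Set.Icc (0:ℝ) 1)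
    (pk : ℕ → Q → ℝ) (p : Q → ℝ) (s : Q → ℝ)
    (hpk : ∀ k, MemLp (pk k) 2 μ) (hp : MemLp p 2 μ) (hs : MemLp s 2 μ)
    (hweak : ∀ φ : Q → ℝ, MemLp φ 2 μ →
      Tendsto (fun k => ∫ x, pk k x * φ x ∂μ) atTop (𝓝 (∫ x, p x * φ x ∂μ)))
    (hstrong : Tendsto (fun k => eLpNorm (fun x => S (pk k x) - s x) 2 μ)
      atTop (𝓝 0)) :
    s =ᵐ[μ] fun x => S (p x) := by
  have hC : ∀ z, |S z| ≤ 1 := fun z => abs_le.2 ⟨by linarith [(hSbd z).1], (hSbd z).2⟩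
  exact ae_eq_comp_of_forall_integral_sub_mul_sub_nonneg hcont hC hp hs fun φ hφ =>
    integral_sub_mul_sub_nonneg_of_tendsto hmono hcont hC hpk hp hs hweak hstrong hφ
end
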